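/- Let q be a prime power with q > 2, let h(x) := 1 - x^(q-2) over F_q, and let g(x) := h(h(h(x))). Then g induces on F_q the transposition (0 1): the evaluation map of g sends 0 to 1, sends 1 to 0, and fixes every other element of F_q. -/

import Mathlib

/-! Since `x ^ (q - 1) = 1` for `x ≠ 0` and `0 ^ (q - 2) = 0` when `q > 2`, the map `h` is
`x ↦ 1 - x⁻¹` on all of `F_q` (with `0⁻¹ = 0`). Away from `0` and `1` this is a Möbius
transformation of order three, while `h` swaps `0` and `1`, so `h ∘ h ∘ h` swaps them too. -/

theorem FiniteField.pow_card_sub_two_eq_inv {K : Type*} [Field K] [Fintype K]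
    (hK : 2 < Fintype.card K) (x : K) : x ^ (Fintype.card K - 2) = x⁻¹ := by
  rcases eq_or_ne x 0 with rfl | hx
  · rw [inv_zero, zero_pow (by omega)]
  · refine eq_inv_of_mul_eq_one_left ?_
    rw [← pow_succ, show Fintype.card K - 2 + 1 = Fintype.card K - 1 by omega,
      FiniteField.pow_card_sub_one_eq_one x hx]

theorem one_sub_inv_iterate_three {K : Type*} [Field K] {x : K} (hx₀ : x ≠ 0) (hx₁ : x ≠ 1) :
    1 - (1 - (1 - x⁻¹)⁻¹)⁻¹ = x := by
  have hx₁' : x - 1 ≠ 0 := sub_ne_zero.mpr hx₁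
  have step₁ : 1 - x⁻¹ = (x - 1) / x := by field_simp
  have step₂ : 1 - ((x - 1) / x)⁻¹ = -(x - 1)⁻¹ := by field_simp; ring
  rw [step₁, step₂, inv_neg, inv_inv]
  ring

/-- For a finite field `F` with `q > 2` elements, let `h(x) = 1 - x^(q-2)` and
`g(x) = h(h(h(x)))`. Then `g` induces the transposition `(0 1)` on `F`:
it sends `0` to `1`, `1` to `0`, and fixes every other element. -/
theorem carlitz_g_transposition (F : Type*) [Field F] [Fintype F]
    (hF : 2 < Fintype.card F) (h g : F → F)
    (hh : ∀ x : F, h x = 1 - x ^ (Fintype.card F - 2))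
    (hg : ∀ x : F, g x = h (h (h x))) :
    g 0 = 1 ∧ g 1 = 0 ∧ ∀ x : F, x ≠ 0 → x ≠ 1 → g x = x := by
  have hh' : ∀ x : F, h x = 1 - x⁻¹ := fun x => by
    rw [hh, FiniteField.pow_card_sub_two_eq_inv hF]
  have h₀ : h 0 = 1 := by rw [hh', inv_zero, sub_zero]
  have h₁ : h 1 = 0 := by rw [hh', inv_one, sub_self]
  refine ⟨by rw [hg, h₀, h₁, h₀], by rw [hg, h₁, h₀, h₁], fun x hx₀ hx₁ => ?_⟩
  rw [hg, hh', hh', hh', one_sub_inv_iterate_three hx₀ hx₁]
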